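/- arXiv:1807.11572 — 5 statements merged into one kernel-verified Lean document; each statement's English description precedes it below -/
import Mathlib

section
/- Let X be a d×d matrix in upper-triangular Jordan form with Jordan blocks X^{(1)}, ..., X^{(M)} of sizes n_1, ..., n_M and eigenvalues k_1, ..., k_M. Let ⟨S| = (x_1^{(1)},...,x_{n_1}^{(1)}, ..., x_1^{(M)},...,x_{n_M}^{(M)}) be a row covector. Then the determinant of the d×d matrix whose (i,j) entry is the j-th component of ⟨S|X^{i-1} equals ∏_{a=1}^M (x_1^{(a)})^{n_a} · ∏_{1 ≤ a < b ≤ M} (k_b - k_a)^{n_a n_b}. -/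
open Matrix

/-- The block-diagonal Jordan matrix with `M` upper-triangular Jordan blocks,
the `a`-th block of size `n a` with eigenvalue `k a` on the diagonal and `1`'s on
the superdiagonal. It is indexed by the sigma type `(a : Fin M) × Fin (n a)`. -/
def jordanMatrix {K : Type*} [Field K] {M : ℕ} (n : Fin M → ℕ) (k : Fin M → K) :
    Matrix ((a : Fin M) × Fin (n a)) ((a : Fin M) × Fin (n a)) K :=
  Matrix.of fun p q =>
    if p.1 = q.1 then
      (if (p.2 : ℕ) = (q.2 : ℕ) then k p.1
       else if (p.2 : ℕ) + 1 = (q.2 : ℕ) then 1 else 0)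
    else 0

/-- The canonical (block-ordered) enumeration of the index set
`(a : Fin M) × Fin (n a)` by `Fin (∑ a, n a)`: the pair `⟨a, i⟩` is sent to
`(∑_{b < a} n b) + i`. -/
def sigmaIndex {M : ℕ} (n : Fin M → ℕ) (p : (a : Fin M) × Fin (n a)) :
    Fin (∑ a, n a) :=
  ⟨(∑ b ∈ Finset.Iio p.1, n b) + (p.2 : ℕ), by
    have h2 : (p.2 : ℕ) < n p.1 := p.2.isLt
    have h1 : (∑ b ∈ insert p.1 (Finset.Iio p.1), n b) ≤ ∑ a, n a :=
      Finset.sum_le_sum_of_subset (Finset.subset_univ _)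
    rw [Finset.sum_insert (by simp)] at h1
    omega⟩

/-!
Replacing the rows `S ⬝ X^t` (`t < d`) by `S ⬝ P_t(X)` with `P_t` monic of degree `t` multiplies
the matrix by a unitriangular one, so the determinant does not change. Take for `P_t` the Newton
basis of the node list in which each `k a` is repeated `n a` times: the row at position `i` of
block `a` becomes `S ⬝ P(X)` with `P = (x - k a)^i ∏_{c < a} (x - k c)^(n c)`. As
`(J_c - k c)^(n c) = 0` for the Jordan block `J_c`, this row vanishes on all earlier blocks; on
block `a`, the factor `(J_a - k a)^i` shifts `S` by `i` places and the remaining factor is upper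
triangular with diagonal `∏_{c < a} (k a - k c)^(n c)`. The new matrix is thus upper triangular,
with diagonal entries `x₁^(a) ∏_{c < a} (k a - k c)^(n c)`.
-/

open Finset Polynomial

namespace Matrix

variable {R : Type*} [CommRing R]

theorem BlockTriangular.det_eq_prod_diag_of_equiv {ι α : Type*} [Fintype ι] [DecidableEq ι]
    [Fintype α] [LinearOrder α] {W : Matrix ι ι R} (e : ι ≃ α) (hW : W.BlockTriangular e) :
    W.det = ∏ p, W p p := by
  rw [← det_submatrix_equiv_self e.symm, det_of_isUpperTriangular]
  · exact e.symm.prod_comp fun p => W p p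
  · simpa only [e.self_comp_symm] using hW.submatrix (f := e.symm)

theorem det_vecMul_aeval_eq_det_vecMul_pow {ι : Type*} [Fintype ι] [DecidableEq ι] {d : ℕ}
    (e : ι ≃ Fin d) (A : Matrix ι ι R) (v : ι → R) {P : ι → R[X]}
    (hmonic : ∀ p, (P p).Monic) (hdeg : ∀ p, (P p).natDegree = e p) :
    (of fun p => v ᵥ* aeval A (P p)).det = (of fun p => v ᵥ* A ^ (e p : ℕ)).det := by
  have hcoeff : (of fun p p' => (P p).coeff (e p')).det = 1 := by
    rw [← det_submatrix_equiv_self e.symm, ← det_transpose]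
    convert det_matrixOfPolynomials (fun t => P (e.symm t)) (by simp [hdeg]) (fun t => hmonic _)
    ext
    simp
  have hfactor : of (fun p => v ᵥ* aeval A (P p)) =
      of (fun p p' => (P p).coeff (e p')) * of fun p => v ᵥ* A ^ (e p : ℕ) := by
    ext p q
    rw [mul_apply, of_apply, aeval_eq_sum_range' ((hdeg p).trans_lt (e p).2), vecMul_sum]
    simp only [of_apply, vecMul_smul, Finset.sum_apply, Pi.smul_apply, smul_eq_mul]
    rw [e.sum_comp (fun t => (P p).coeff t * (v ᵥ* A ^ (t : ℕ)) q),
      Fin.sum_univ_eq_sum_range (fun t => (P p).coeff t * (v ᵥ* A ^ t) q)]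
  rw [hfactor, det_mul, hcoeff, one_mul]

section UpperTriangular

variable {m : Type*} [Fintype m] [LinearOrder m] {U : Matrix m m R}
  {v : m → R} {i : m}

theorem vecMul_apply_eq_zero_of_isUpperTriangular (hU : U.IsUpperTriangular)
    (hv : ∀ l < i, v l = 0) {j : m} (hj : j < i) : (v ᵥ* U) j = 0 := by
  refine Finset.sum_eq_zero fun l _ => ?_
  rcases lt_or_ge l i with hl | hl
  · rw [hv l hl, zero_mul]
  · exact mul_eq_zero_of_right _ (hU (hj.trans_le hl))

theorem vecMul_apply_self_of_isUpperTriangular (hU : U.IsUpperTriangular)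
    (hv : ∀ l < i, v l = 0) : (v ᵥ* U) i = v i * U i i := by
  refine Finset.sum_eq_single i (fun l _ hl => ?_) (by simp)
  rcases hl.lt_or_gt with hl | hl
  · rw [hv l hl, zero_mul]
  · exact mul_eq_zero_of_right _ (hU hl)

theorem vecMul_aeval_of_isUpperTriangular (hU : U.IsUpperTriangular)
    (hv : ∀ l < i, v l = 0) (P : R[X]) :
    (∀ l < i, (v ᵥ* aeval U P) l = 0) ∧ (v ᵥ* aeval U P) i = P.eval (U i i) * v i := by
  induction P using Polynomial.induction_on with
  | C c =>
    simp only [aeval_C, algebraMap_eq_diagonal, vecMul_diagonal, eval_C, Pi.algebraMap_apply,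
      Algebra.algebraMap_self, RingHom.id_apply]
    exact ⟨fun l hl => by rw [hv l hl, zero_mul], mul_comm _ _⟩
  | add P Q hP hQ =>
    simp only [map_add, vecMul_add, Pi.add_apply, eval_add, add_mul]
    exact ⟨fun l hl => by rw [hP.1 l hl, hQ.1 l hl, add_zero], by rw [hP.2, hQ.2]⟩
  | monomial t c h =>
    have hstep : aeval U (C c * X ^ (t + 1)) = aeval U (C c * X ^ t) * U := by
      rw [pow_succ, ← mul_assoc, map_mul, aeval_X]
    rw [hstep, ← vecMul_vecMul]
    refine ⟨fun l hl => vecMul_apply_eq_zero_of_isUpperTriangular hU h.1 hl, ?_⟩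
    rw [vecMul_apply_self_of_isUpperTriangular hU h.1, h.2]
    simp only [eval_mul, eval_C, eval_pow, eval_X]
    ring

end UpperTriangular

def shiftMatrix (m : ℕ) : Matrix (Fin m) (Fin m) R :=
  of fun i j => if (i : ℕ) + 1 = j then 1 else 0

theorem vecMul_shiftMatrix_apply {m : ℕ} (v : Fin m → R) (j : Fin m) :
    (v ᵥ* shiftMatrix m) j = if h : 1 ≤ (j : ℕ) then v ⟨j - 1, by omega⟩ else 0 := by
  simp only [vecMul, dotProduct, shiftMatrix, of_apply, mul_ite, mul_one, mul_zero]
  split_ifs with h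
  · refine (Finset.sum_eq_single ⟨j - 1, by omega⟩ (fun l _ hl => if_neg fun hl' => hl ?_)
      (by simp)).trans (if_pos (by simp; omega))
    ext
    simp only
    omega
  · exact Finset.sum_eq_zero fun l _ => if_neg (by omega)

theorem vecMul_shiftMatrix_pow_apply {m : ℕ} (v : Fin m → R) (t : ℕ) (j : Fin m) :
    (v ᵥ* shiftMatrix m ^ t) j = if h : t ≤ (j : ℕ) then v ⟨j - t, by omega⟩ else 0 := by
  induction t generalizing j with
  | zero => simp
  | succ t ih =>
    rw [pow_succ, ← vecMul_vecMul, vecMul_shiftMatrix_apply]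
    simp only [ih]
    split_ifs <;> first | rfl | omega | (congr 2; omega)

def blockDiagonal'AlgHom {o : Type*} {m' : o → Type*} [Fintype o] [DecidableEq o]
    [∀ i, Fintype (m' i)] [∀ i, DecidableEq (m' i)] :
    (∀ i, Matrix (m' i) (m' i) R) →ₐ[R] Matrix (Σ i, m' i) (Σ i, m' i) R :=
  { blockDiagonal'RingHom m' R with
    commutes' := fun r => by
      simp [algebraMap_eq_diagonal, Pi.algebraMap_def] }

theorem aeval_blockDiagonal' {o : Type*} {m' : o → Type*} [Fintype o] [DecidableEq o]
    [∀ i, Fintype (m' i)] [∀ i, DecidableEq (m' i)] (J : ∀ i, Matrix (m' i) (m' i) R)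
    (P : R[X]) : aeval (blockDiagonal' J) P = blockDiagonal' fun i => aeval (J i) P := by
  change aeval (blockDiagonal'AlgHom J) P = _
  rw [aeval_algHom_apply]
  exact congrArg blockDiagonal' (funext fun i => aeval_pi_apply₂ J P i)

theorem vecMul_blockDiagonal'_apply {o : Type*} {m' : o → Type*} [Fintype o] [DecidableEq o]
    [∀ i, Fintype (m' i)] (B : ∀ i, Matrix (m' i) (m' i) R) (v : (Σ i, m' i) → R)
    (b : o) (j : m' b) :
    (v ᵥ* blockDiagonal' B) ⟨b, j⟩ = ((fun l => v ⟨b, l⟩) ᵥ* B b) j := by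
  simp only [vecMul, dotProduct]
  rw [Fintype.sum_sigma, Fintype.sum_eq_single b]
  · simp [blockDiagonal'_apply_eq]
  · intro c hc
    simp [blockDiagonal'_apply_ne _ _ _ hc]

def jordanBlock (m : ℕ) (c : R) : Matrix (Fin m) (Fin m) R :=
  algebraMap R _ c + shiftMatrix m

theorem jordanBlock_isUpperTriangular (m : ℕ) (c : R) : (jordanBlock m c).IsUpperTriangular := by
  intro i j (hij : j < i)
  simp only [jordanBlock, shiftMatrix, add_apply, algebraMap_matrix_apply, of_apply]
  rw [if_neg hij.ne', if_neg (by omega), add_zero]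

theorem jordanBlock_apply_self (m : ℕ) (c : R) (i : Fin m) : jordanBlock m c i i = c := by
  simp [jordanBlock, shiftMatrix, algebraMap_matrix_apply]

theorem aeval_jordanBlock_X_sub_C (m : ℕ) (c : R) :
    aeval (jordanBlock m c) (X - C c) = shiftMatrix m := by
  rw [map_sub, aeval_X, aeval_C, jordanBlock, add_sub_cancel_left]

end Matrix

section JordanMatrix

variable {K : Type*} [Field K] {M : ℕ} (n : Fin M → ℕ) (k : Fin M → K)

theorem jordanMatrix_eq_blockDiagonal' :
    jordanMatrix n k = blockDiagonal' fun a => jordanBlock (n a) (k a) := by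
  ext ⟨a, i⟩ ⟨b, j⟩
  by_cases hab : a = b
  · subst hab
    simp only [jordanMatrix, jordanBlock, shiftMatrix, blockDiagonal'_apply_eq, of_apply,
      Matrix.add_apply, algebraMap_matrix_apply, Fin.ext_iff, if_true]
    split_ifs <;> first | omega | simp
  · simp [jordanMatrix, hab, blockDiagonal'_apply_ne]

theorem sigmaIndex_eq_finSigmaFinEquiv : sigmaIndex n = ⇑(finSigmaFinEquiv (n := n)) := by
  ext ⟨a, i⟩
  rw [finSigmaFinEquiv_apply]
  change ∑ b ∈ Iio a, n b + (i : ℕ) = _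
  congr 1
  refine Eq.trans ?_ (sum_map univ (Fin.castLEEmb a.2.le) n)
  congr 1
  ext b
  simp only [mem_Iio, mem_map, mem_univ, true_and, Fin.castLEEmb_apply]
  exact ⟨fun h => ⟨⟨b, h⟩, rfl⟩, by rintro ⟨c, rfl⟩; exact c.2⟩

theorem sigmaIndex_lt_sigmaIndex_of_fst_lt {a b : Fin M} (hab : a < b) (i : Fin (n a))
    (j : Fin (n b)) : sigmaIndex n ⟨a, i⟩ < sigmaIndex n ⟨b, j⟩ := by
  have hsum : ∑ c ∈ Iio a, n c + n a ≤ ∑ c ∈ Iio b, n c := by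
    rw [add_comm, ← sum_insert notMem_Iio_self, Iio_insert]
    exact sum_le_sum_of_subset fun c hc => mem_Iio.2 ((mem_Iic.1 hc).trans_lt hab)
  change ∑ c ∈ Iio a, n c + (i : ℕ) < ∑ c ∈ Iio b, n c + j
  omega

noncomputable def newtonPoly (p : (a : Fin M) × Fin (n a)) : K[X] :=
  (X - C (k p.1)) ^ (p.2 : ℕ) * ∏ c ∈ Iio p.1, (X - C (k c)) ^ n c

theorem newtonPoly_monic (p : (a : Fin M) × Fin (n a)) : (newtonPoly n k p).Monic :=
  ((monic_X_sub_C _).pow _).mul (monic_prod_of_monic _ _ fun _ _ => (monic_X_sub_C _).pow _)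

theorem natDegree_newtonPoly (p : (a : Fin M) × Fin (n a)) :
    (newtonPoly n k p).natDegree = sigmaIndex n p := by
  rw [newtonPoly, ((monic_X_sub_C _).pow _).natDegree_mul
    (monic_prod_of_monic _ _ fun _ _ => (monic_X_sub_C _).pow _),
    natDegree_prod_of_monic _ _ fun _ _ => (monic_X_sub_C _).pow _]
  simp [natDegree_pow, sigmaIndex, add_comm]

variable (S : ((a : Fin M) × Fin (n a)) → K)

theorem vecMul_aeval_newtonPoly_of_fst_lt {a b : Fin M} (hba : b < a) (i : Fin (n a))
    (j : Fin (n b)) : (S ᵥ* aeval (jordanMatrix n k) (newtonPoly n k ⟨a, i⟩)) ⟨b, j⟩ = 0 := by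
  obtain ⟨Q, hQ⟩ : (X - C (k b)) ^ n b ∣ newtonPoly n k ⟨a, i⟩ :=
    dvd_mul_of_dvd_right (dvd_prod_of_mem _ (mem_Iio.2 hba)) _
  rw [jordanMatrix_eq_blockDiagonal', aeval_blockDiagonal', vecMul_blockDiagonal'_apply, hQ,
    map_mul, map_pow, aeval_jordanBlock_X_sub_C, ← vecMul_vecMul]
  have hkill : (fun l => S ⟨b, l⟩) ᵥ* shiftMatrix (n b) ^ n b = 0 := by
    ext l
    rw [vecMul_shiftMatrix_pow_apply, dif_neg (by omega), Pi.zero_apply]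
  rw [hkill, zero_vecMul, Pi.zero_apply]

theorem vecMul_aeval_newtonPoly_fst_self (a : Fin M) (i : Fin (n a)) :
    (∀ j < i, (S ᵥ* aeval (jordanMatrix n k) (newtonPoly n k ⟨a, i⟩)) ⟨a, j⟩ = 0) ∧
      (S ᵥ* aeval (jordanMatrix n k) (newtonPoly n k ⟨a, i⟩)) ⟨a, i⟩ =
        S ⟨a, ⟨0, i.pos⟩⟩ * ∏ c ∈ Iio a, (k a - k c) ^ n c := by
  rw [jordanMatrix_eq_blockDiagonal', aeval_blockDiagonal']
  simp only [vecMul_blockDiagonal'_apply]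
  rw [newtonPoly, map_mul, map_pow, aeval_jordanBlock_X_sub_C, ← vecMul_vecMul]
  have hshift : ∀ l < i, ((fun l => S ⟨a, l⟩) ᵥ* shiftMatrix (n a) ^ (i : ℕ)) l = 0 := by
    intro l hl
    rw [vecMul_shiftMatrix_pow_apply, dif_neg (by simpa using hl)]
  obtain ⟨hzero, hdiag⟩ :=
    vecMul_aeval_of_isUpperTriangular (jordanBlock_isUpperTriangular _ (k a)) hshift
      (∏ c ∈ Iio a, (X - C (k c)) ^ n c)
  refine ⟨hzero, ?_⟩
  rw [hdiag, vecMul_shiftMatrix_pow_apply, dif_pos le_rfl, jordanBlock_apply_self, mul_comm]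
  simp [eval_prod]

theorem blockTriangular_vecMul_aeval_newtonPoly :
    (of fun p => S ᵥ* aeval (jordanMatrix n k) (newtonPoly n k p)).BlockTriangular
      (sigmaIndex n) := by
  rintro ⟨a, i⟩ ⟨b, j⟩ hlt
  rw [of_apply]
  rcases lt_trichotomy b a with hba | rfl | hab
  · exact vecMul_aeval_newtonPoly_of_fst_lt n k S hba i j
  · refine (vecMul_aeval_newtonPoly_fst_self n k S b i).1 j ?_
    change ∑ c ∈ Iio b, n c + (j : ℕ) < ∑ c ∈ Iio b, n c + i at hlt
    exact Fin.lt_def.2 (by omega)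
  · exact absurd hlt (sigmaIndex_lt_sigmaIndex_of_fst_lt n hab i j).not_gt

theorem prod_prod_Iio_pow_eq_prod_prod_Ioi :
    ∏ a, (∏ c ∈ Iio a, (k a - k c) ^ n c) ^ n a =
      ∏ a, ∏ b ∈ Ioi a, (k b - k a) ^ (n a * n b) := by
  simp_rw [← prod_pow, ← pow_mul]
  exact prod_comm' (by simp [and_comm])

end JordanMatrix

/-- confluent Vandermonde determinant. Let `X` be the `d × d`
Jordan matrix with blocks of sizes `n a` and eigenvalues `k a` (`d = ∑ n a`), and
let `S` be a row covector. Then the determinant of the `d × d` matrix whose `i`-th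
row is `S ⬝ X^(i-1)` (rows enumerated in block order) equals
`∏_a (x₁^(a))^(n a) · ∏_{a < b} (k b - k a)^(n a · n b)`, where `x₁^(a)` is the
component of `S` on the first coordinate of block `a`. -/
theorem stmt7 {K : Type*} [Field K] {M : ℕ} (n : Fin M → ℕ) (hn : ∀ a, 0 < n a)
    (k : Fin M → K) (S : ((a : Fin M) × Fin (n a)) → K) :
    Matrix.det (Matrix.of fun p q : (a : Fin M) × Fin (n a) =>
        (S ᵥ* (jordanMatrix n k) ^ ((sigmaIndex n p : ℕ))) q)
      = (∏ a, S ⟨a, ⟨0, hn a⟩⟩ ^ n a) *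
        ∏ a, ∏ b ∈ Finset.Ioi a, (k b - k a) ^ (n a * n b) := by
  have hdeg := natDegree_newtonPoly n k
  have htri := blockTriangular_vecMul_aeval_newtonPoly n k S
  rw [sigmaIndex_eq_finSigmaFinEquiv] at hdeg htri ⊢
  rw [← det_vecMul_aeval_eq_det_vecMul_pow _ _ S (newtonPoly_monic n k) hdeg,
    htri.det_eq_prod_diag_of_equiv, Fintype.prod_sigma]
  simp only [of_apply, (vecMul_aeval_newtonPoly_fst_self n k S _ _).2, prod_mul_distrib,
    Fin.prod_const, prod_prod_Iio_pow_eq_prod_prod_Ioi]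
  exact congrArg (· * _) (prod_congr rfl fun a _ => Fin.prod_const (n a) (S ⟨a, ⟨0, hn a⟩⟩))
end

section
/- Suppose a commuting family of operators T(λ) on a d-dimensional space H admits points y_1, ..., y_N and a covector ⟨L| such that the covectors ⟨h_1,...,h_N| = ⟨L| ∏_{a=1}^N T(y_a)^{h_a}, with h_a ∈ {0,...,d_a - 1} and ∏ d_a = d, form a basis of H*. Then the joint spectrum of T(y_1), ..., T(y_N) is w-simple: for any joint eigenvalue tuple (t_1, ..., t_N) there is at most one joint eigenvector up to scalar, and its components in the basis are ⟨h_1,...,h_N|t⟩ = ⟨L|t⟩ · ∏_{a=1}^N t_a^{h_a}, with ⟨L|t⟩ ≠ 0. -/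
/-!
Evaluating the basis covectors `⟨h| = L ∘ ∏_a T_a ^ h_a` on a joint eigenvector `x` with
eigenvalues `t` gives `⟨h|x⟩ = L x · ∏_a t_a ^ h_a`: all coordinates of `x` are determined by
the single number `L x`. Since joint eigenvectors for `t` form a subspace, `L` is injective on
it; hence `L v ≠ 0` for `v ≠ 0`, and `w - (L w / L v) • v` vanishes for any other joint
eigenvector `w`.
-/

open Module End

namespace Module.End

variable {R M : Type*} [CommRing R] [AddCommGroup M] [Module R M]

theorem pow_apply_of_mem_eigenspace {f : End R M} {μ : R} {x : M} (hx : x ∈ f.eigenspace μ)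
    (n : ℕ) : (f ^ n) x = μ ^ n • x := by
  induction n with
  | zero => simp
  | succ n ih =>
    rw [pow_succ, mul_apply, mem_eigenspace_iff.mp hx, map_smul, ih, smul_smul, ← pow_succ']

theorem noncommProd_apply_of_mem_eigenspace {ι : Type*} (s : Finset ι) (f : ι → End R M)
    (comm : (s : Set ι).Pairwise (Function.onFun Commute f)) {μ : ι → R} {x : M}
    (hx : ∀ a ∈ s, x ∈ (f a).eigenspace (μ a)) :
    s.noncommProd f comm x = (∏ a ∈ s, μ a) • x := by
  classical
  induction s using Finset.induction_on with
  | empty => simp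
  | @insert a s ha ih =>
    rw [Finset.noncommProd_insert_of_notMem _ _ _ _ ha, mul_apply,
      ih _ fun c hc => hx c (Finset.mem_insert_of_mem hc), map_smul,
      mem_eigenspace_iff.mp (hx a (Finset.mem_insert_self a s)), Finset.prod_insert ha,
      smul_smul, mul_comm]

end Module.End

theorem Module.Basis.eq_zero_of_forall_dual_apply_eq_zero {K V ι : Type*} [Field K]
    [AddCommGroup V] [Module K V] (b : Basis ι K (Dual K V)) {x : V} (hx : ∀ i, b i x = 0) :
    x = 0 := by
  have heval : Dual.eval K V x = 0 := b.ext hx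
  exact (forall_dual_apply_eq_zero_iff K x).mp fun φ => LinearMap.congr_fun heval φ

section SeparatedSpectrum

variable {K H ι : Type*} [Field K] [AddCommGroup H] [Module K H] [Fintype ι]
  {d : ι → ℕ} {T : ι → End K H} (hcomm : ∀ a b, Commute (T a) (T b))
  {L : Dual K H} {b : Basis ((a : ι) → Fin (d a)) K (Dual K H)}
  {t : ι → K} {x : H}

theorem basis_apply_of_mem_iInf_eigenspace
    (hb : ∀ h : (a : ι) → Fin (d a),
      b h = L ∘ₗ (Finset.univ.noncommProd (fun a : ι => (T a) ^ ((h a : ℕ)))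
        (fun a _ c _ _ => Commute.pow_pow (hcomm a c) _ _)))
    (hx : x ∈ ⨅ a, (T a).eigenspace (t a)) (h : (a : ι) → Fin (d a)) :
    b h x = L x * ∏ a, t a ^ (h a : ℕ) := by
  have hpow : ∀ a ∈ Finset.univ, x ∈ (T a ^ (h a : ℕ)).eigenspace (t a ^ (h a : ℕ)) :=
    fun a _ => mem_eigenspace_iff.mpr <|
      pow_apply_of_mem_eigenspace ((Submodule.mem_iInf _).mp hx a) _
  calc b h x = L ((∏ a, t a ^ (h a : ℕ)) • x) := by
        rw [hb h]; exact congrArg L (noncommProd_apply_of_mem_eigenspace _ _ _ hpow)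
    _ = L x * ∏ a, t a ^ (h a : ℕ) := by rw [map_smul, smul_eq_mul, mul_comm]

theorem eq_zero_of_mem_iInf_eigenspace_of_apply_eq_zero
    (hb : ∀ h : (a : ι) → Fin (d a),
      b h = L ∘ₗ (Finset.univ.noncommProd (fun a : ι => (T a) ^ ((h a : ℕ)))
        (fun a _ c _ _ => Commute.pow_pow (hcomm a c) _ _)))
    (hx : x ∈ ⨅ a, (T a).eigenspace (t a)) (hLx : L x = 0) : x = 0 :=
  b.eq_zero_of_forall_dual_apply_eq_zero fun h => by
    rw [basis_apply_of_mem_iInf_eigenspace hcomm hb hx h, hLx, zero_mul]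

end SeparatedSpectrum

/-- Suppose a family of pairwise commuting operators
`T 1, …, T N` (the transfer matrix evaluated at the points `y_1, …, y_N`) on a
`d`-dimensional space `H` admits a covector `L` such that the covectors
`⟨h| = L ∘ ∏_a (T a)^(h a)`, `h a ∈ {0, …, d a - 1}` with `∏ d a = d`, form a
basis of `H*`. Then the joint spectrum of the `T a` is w-simple: for any joint
eigenvector `v` with eigenvalue tuple `t`, one has `L v ≠ 0`, the components of
`v` in this basis are `⟨h|v⟩ = L v · ∏_a (t a)^(h a)`, and any other joint
eigenvector for the same tuple `t` is a scalar multiple of `v`. -/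
theorem stmt9 {K : Type*} [Field K]
    {H : Type*} [AddCommGroup H] [Module K H]
    {N : ℕ} (d : Fin N → ℕ) (T : Fin N → Module.End K H)
    (hcomm : ∀ a b, T a * T b = T b * T a)
    (L : Module.Dual K H)
    (b : Module.Basis ((a : Fin N) → Fin (d a)) K (Module.Dual K H))
    (hb : ∀ h : (a : Fin N) → Fin (d a),
      b h = L ∘ₗ (Finset.univ.noncommProd (fun a : Fin N => (T a) ^ ((h a : ℕ)))
        (fun a _ c _ _ => Commute.pow_pow (hcomm a c) _ _)))
    (t : Fin N → K) (v : H) (hv : v ≠ 0) (hev : ∀ a, (T a) v = t a • v) :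
    L v ≠ 0 ∧
    (∀ h : (a : Fin N) → Fin (d a), (b h) v = L v * ∏ a, t a ^ ((h a : ℕ))) ∧
    (∀ w : H, (∀ a, (T a) w = t a • w) → ∃ c : K, w = c • v) := by
  have mem_joint : ∀ {x : H}, (∀ a, T a x = t a • x) → x ∈ ⨅ a, (T a).eigenspace (t a) :=
    fun hx => (Submodule.mem_iInf _).mpr fun a => mem_eigenspace_iff.mpr (hx a)
  have hLv : L v ≠ 0 := fun h0 =>
    hv (eq_zero_of_mem_iInf_eigenspace_of_apply_eq_zero hcomm hb (mem_joint hev) h0)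
  refine ⟨hLv, basis_apply_of_mem_iInf_eigenspace hcomm hb (mem_joint hev), fun w hw =>
    ⟨L w / L v, sub_eq_zero.mp ?_⟩⟩
  refine eq_zero_of_mem_iInf_eigenspace_of_apply_eq_zero hcomm hb
    (sub_mem (mem_joint hw) (Submodule.smul_mem _ _ (mem_joint hev))) ?_
  rw [map_sub, map_smul, smul_eq_mul, div_mul_cancel₀ _ hLv, sub_self]
end

section
/- Let a(λ) = ∏_{a=1}^N (λ - ξ_a + η) and d(λ) = ∏_{a=1}^N (λ - ξ_a). Suppose t(λ) is a polynomial of degree N with leading coefficient tr K and Q(λ) = ∏_{a=1}^M (λ - λ_a) (M ≤ N, λ_a ≠ ξ_b for all a,b) satisfy the quantum spectral curve α(λ)Q(λ-2η) - β(λ)t(λ-η)Q(λ-η) + a(λ)d(λ-η)(det K)Q(λ) = 0, where β(λ) = k_0 a(λ), α(λ) = β(λ)β(λ-η), and k_0 ≠ 0 satisfies k_0² - k_0 tr K + det K = 0. Then t satisfies the fusion relations t(ξ_a)t(ξ_a - η) = a(ξ_a)d(ξ_a - η) det K for all a = 1, ..., N. -/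
/-- Let `a(λ) = ∏ (λ - ξ_i + η)` and `d(λ) = ∏ (λ - ξ_i)`.
Suppose `t(λ)` is a polynomial of degree `N` with leading coefficient `tr K`, and
`Q(λ) = ∏_{a=1}^M (λ - μ_a)` (with `M ≤ N` and `μ_a ≠ ξ_b`) satisfy the quantum
spectral curve `α(λ)Q(λ-2η) - β(λ)t(λ-η)Q(λ-η) + a(λ)d(λ-η)(det K)Q(λ) = 0`,
where `β(λ) = k₀ a(λ)`, `α(λ) = β(λ)β(λ-η)`, and `k₀ ≠ 0` is an eigenvalue of the
`2×2` matrix `K` (`k₀² - k₀ tr K + det K = 0`). Then `t` satisfies the fusion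
relations `t(ξ_a)t(ξ_a - η) = a(ξ_a)d(ξ_a - η) det K` for all `a`. -/
theorem stmt12 {N M : ℕ} (hMN : M ≤ N)
    (ξ : Fin N → ℂ) (μ : Fin M → ℂ) (η : ℂ) (hη : η ≠ 0)
    (hξ : ∀ a b : Fin N, a ≠ b → ∀ r : ℤ, r ∈ ({-1, 0, 1} : Set ℤ) →
      ξ a ≠ ξ b + (r : ℂ) * η)
    (K : Matrix (Fin 2) (Fin 2) ℂ) (k₀ : ℂ) (hk₀ : k₀ ≠ 0)
    (hk₀eq : k₀ ^ 2 - k₀ * K.trace + K.det = 0)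
    (hμξ : ∀ a b, μ a ≠ ξ b)
    (t : Polynomial ℂ) (ht : t.natDegree = N) (htl : t.leadingCoeff = K.trace)
    (af df Q α β : ℂ → ℂ)
    (haf : ∀ lam, af lam = ∏ i, (lam - ξ i + η))
    (hdf : ∀ lam, df lam = ∏ i, (lam - ξ i))
    (hQ : ∀ lam, Q lam = ∏ a, (lam - μ a))
    (hβ : ∀ lam, β lam = k₀ * af lam)
    (hα : ∀ lam, α lam = β lam * β (lam - η))
    (heq : ∀ lam, α lam * Q (lam - 2 * η)
        - β lam * t.eval (lam - η) * Q (lam - η)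
        + af lam * df (lam - η) * K.det * Q lam = 0) :
    ∀ a : Fin N,
      t.eval (ξ a) * t.eval (ξ a - η) = af (ξ a) * df (ξ a - η) * K.det := by
  intro a
  -- nonvanishing of af (ξ a)
  have haf_ne : af (ξ a) ≠ 0 := by
    rw [haf]
    apply Finset.prod_ne_zero_iff.mpr
    intro i _
    by_cases h : i = a
    · subst h; simpa using hη
    · intro hc
      apply hξ a i (fun he => h he.symm) (-1) (by norm_num)
      push_cast
      linear_combination hc
  have hdf_ne : df (ξ a - η) ≠ 0 := by
    rw [hdf]
    apply Finset.prod_ne_zero_iff.mpr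
    intro i _
    by_cases h : i = a
    · subst h; simpa using hη
    · intro hc
      apply hξ a i (fun he => h he.symm) 1 (by norm_num)
      push_cast
      linear_combination hc
  have hQa_ne : Q (ξ a) ≠ 0 := by
    rw [hQ]
    apply Finset.prod_ne_zero_iff.mpr
    intro b _
    exact sub_ne_zero.mpr (Ne.symm (hμξ b a))
  have hafm0 : af (ξ a - η) = 0 := by
    rw [haf]
    exact Finset.prod_eq_zero (Finset.mem_univ a) (by ring)
  have hdfξ : df (ξ a) = 0 := by
    rw [hdf]
    exact Finset.prod_eq_zero (Finset.mem_univ a) (by ring)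
  -- relation (*) at lam = ξ a
  have hstar : k₀ * t.eval (ξ a - η) * Q (ξ a - η) = df (ξ a - η) * K.det * Q (ξ a) := by
    have h1 := heq (ξ a)
    rw [hα (ξ a), hβ (ξ a), hβ (ξ a - η), hafm0] at h1
    have h2 : af (ξ a) * (k₀ * t.eval (ξ a - η) * Q (ξ a - η))
        = af (ξ a) * (df (ξ a - η) * K.det * Q (ξ a)) := by linear_combination -h1
    exact mul_left_cancel₀ haf_ne h2
  -- polynomial identity to obtain relation (**)
  have hG : k₀ ^ 2 * af (ξ a) * Q (ξ a - η) - k₀ * t.eval (ξ a) * Q (ξ a)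
      + K.det * df (ξ a) * Q (ξ a + η) = 0 := by
    set QP : Polynomial ℂ := ∏ b, (Polynomial.X - Polynomial.C (μ b)) with hQPdef
    set AP : Polynomial ℂ := ∏ i, (Polynomial.X - Polynomial.C (ξ i) + Polynomial.C η) with hAPdef
    set DP : Polynomial ℂ := ∏ i, (Polynomial.X - Polynomial.C (ξ i)) with hDPdef
    set P1 : Polynomial ℂ := ∏ i, (Polynomial.X - Polynomial.C (ξ i - 2 * η)) with hP1def
    have hQPe : ∀ lam, QP.eval lam = Q lam := by
      intro lam; rw [hQ, hQPdef]; simp [Polynomial.eval_prod]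
    have hAPe : ∀ lam, AP.eval lam = af lam := by
      intro lam; rw [haf, hAPdef]; simp [Polynomial.eval_prod]
    have hDPe : ∀ lam, DP.eval lam = df lam := by
      intro lam; rw [hdf, hDPdef]; simp [Polynomial.eval_prod]
    have hP1e : ∀ lam, P1.eval lam = af (lam + η) := by
      intro lam
      rw [haf, hP1def]
      simp only [Polynomial.eval_prod, Polynomial.eval_sub, Polynomial.eval_X, Polynomial.eval_C]
      exact Finset.prod_congr rfl fun i _ => by ring
    set P2 : Polynomial ℂ :=
      Polynomial.C (k₀ ^ 2) * AP * (QP.comp (Polynomial.X - Polynomial.C η))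
        - Polynomial.C k₀ * t * QP
        + Polynomial.C K.det * DP * (QP.comp (Polynomial.X + Polynomial.C η)) with hP2def
    have hP2e : ∀ lam, P2.eval lam
        = k₀ ^ 2 * af lam * Q (lam - η) - k₀ * t.eval lam * Q lam
          + K.det * df lam * Q (lam + η) := by
      intro lam
      rw [hP2def]
      simp [Polynomial.eval_comp, hQPe, hAPe, hDPe]
    have hzero : ∀ lam, (P1 * P2).eval lam = 0 := by
      intro lam
      have h1 := heq (lam + η)
      rw [hα (lam + η), hβ (lam + η), hβ (lam + η - η)] at h1
      have e1 : lam + η - 2 * η = lam - η := by ring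
      have e2 : lam + η - η = lam := by ring
      rw [e1, e2] at h1
      rw [Polynomial.eval_mul, hP1e, hP2e]
      linear_combination h1
    have hPz : P1 * P2 = 0 := Polynomial.funext fun x => by rw [hzero x, Polynomial.eval_zero]
    have hP1ne : P1 ≠ 0 :=
      (Polynomial.monic_prod_of_monic _ _ fun i _ => Polynomial.monic_X_sub_C _).ne_zero
    have hP2z : P2 = 0 := by
      rcases mul_eq_zero.mp hPz with h | h
      · exact absurd h hP1ne
      · exact h
    rw [← hP2e (ξ a), hP2z, Polynomial.eval_zero]
  have hstar2 : t.eval (ξ a) * Q (ξ a) = k₀ * af (ξ a) * Q (ξ a - η) := by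
    have h3 : k₀ * (t.eval (ξ a) * Q (ξ a)) = k₀ * (k₀ * af (ξ a) * Q (ξ a - η)) := by
      linear_combination -hG + K.det * Q (ξ a + η) * hdfξ
    exact mul_left_cancel₀ hk₀ h3
  have h4 : t.eval (ξ a) * t.eval (ξ a - η) * Q (ξ a)
      = af (ξ a) * df (ξ a - η) * K.det * Q (ξ a) := by
    linear_combination t.eval (ξ a - η) * hstar2 + af (ξ a) * hstar
  exact mul_right_cancel₀ hQa_ne h4
end

section
/- Under the setup of the rational gl(2) spin chain: if t(λ) is a polynomial of degree N with leading coefficient tr K satisfying t(ξ_a)t(ξ_a - η) = a(ξ_a)d(ξ_a - η) det K for all a (the fusion relations), and |t⟩ is the vector defined in the SoV covector basis ⟨h_1,...,h_N| = ⟨S| ∏_a (T(ξ_a)/a(ξ_a))^{h_a} by ⟨h_1,...,h_N|t⟩ = ∏_{n=1}^N (t(ξ_n)/a(ξ_n))^{h_n}, then T(λ)|t⟩ = t(λ)|t⟩ for all λ, provided that (1) the covectors form a basis, (2) T(λ) is the polynomial of degree N in λ with leading operator coefficient (tr K)·Id interpolating its values at the points ξ_a^{(h_a)} = ξ_a - h_a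 η, and (3) T satisfies the operator fusion relations T(ξ_a)T(ξ_a - η) = a(ξ_a)d(ξ_a - η)(det K)·Id. -/
/-!
On the separated basis `⟨h| = S ∏ᵢ (T(ξᵢ)/a(ξᵢ))^{hᵢ}` the operator `T` evaluated at the node
`ξᵢ - hᵢη` acts on `v` as the scalar `t(ξᵢ - hᵢη)`. For `hᵢ = 0`, multiplying by
`T(ξᵢ)/a(ξᵢ)` raises `hᵢ` to `1`, which multiplies the prescribed component by `t(ξᵢ)/a(ξᵢ)`.
For `hᵢ = 1`, the operator fusion relation gives
`⟨h| T(ξᵢ - η) = d(ξᵢ - η) det K ⟨h'|` with `h'ᵢ = 0`, and the scalar fusion relation turns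
this coefficient into `t(ξᵢ - η) t(ξᵢ)/a(ξᵢ)`. Both `T(λ)` and `t(λ)` are recovered from their
common leading coefficient `tr K` and their values at these `N` distinct nodes by the same
Lagrange formula, so `⟨h| T(λ) v = t(λ) ⟨h|v⟩` for every `h`, and the `⟨h|` form a basis.
-/

open Polynomial Function

theorem Polynomial.eval_eq_leadingCoeff_mul_prod_add_sum_lagrange {F ι : Type*} [Field F]
    [Fintype ι] [DecidableEq ι] {x : ι → F} (hx : Injective x) {p : F[X]}
    (hp : p.natDegree = Fintype.card ι) (lam : F) :
    p.eval lam = p.leadingCoeff * ∏ i, (lam - x i)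
      + ∑ i, (∏ j ∈ Finset.univ.erase i, (lam - x j) / (x i - x j)) * p.eval (x i) := by
  set q := p - C p.leadingCoeff * Lagrange.nodal Finset.univ x
  have hq_deg : q.degree < (Finset.univ : Finset ι).card := by
    rcases eq_or_ne p 0 with rfl | hp0
    · simp [q, ← hp]
    have hp_deg : p.degree = (Finset.univ : Finset ι).card := by
      rw [degree_eq_natDegree hp0, hp, Finset.card_univ]
    refine hp_deg ▸ degree_sub_lt_left ?_ hp0 ?_
    · rw [degree_C_mul (leadingCoeff_ne_zero.mpr hp0), Lagrange.degree_nodal, hp_deg]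
    · rw [leadingCoeff_mul, leadingCoeff_C, Lagrange.nodal_monic.leadingCoeff, mul_one]
  have hq_nodes : ∀ i ∈ Finset.univ, q.eval (x i) = p.eval (x i) := fun i hi => by
    simp [q, Lagrange.eval_nodal_at_node hi]
  have hq := congrArg (eval lam) (Lagrange.eq_interpolate_of_eval_eq _ hx.injOn hq_deg hq_nodes)
  rw [Lagrange.interpolate_apply, eval_finsetSum, eval_sub, eval_mul, eval_C,
    Lagrange.eval_nodal] at hq
  rw [eq_add_of_sub_eq hq, add_comm]
  congr 1
  refine Finset.sum_congr rfl fun i _ => ?_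
  simp [Lagrange.basis, eval_prod, Lagrange.basisDivisor, div_eq_inv_mul, mul_comm]

theorem Module.Dual.apply_eq_eval_mul_of_lagrange {F ι V : Type*} [Field F] [Fintype ι]
    [DecidableEq ι] [AddCommGroup V] [Module F V] {x : ι → F} (hx : Function.Injective x)
    {p : F[X]} (hp : p.natDegree = Fintype.card ι) {T : F → Module.End F V} {lam : F}
    (hT : T lam = (p.leadingCoeff * ∏ i, (lam - x i)) • (1 : Module.End F V)
      + ∑ i, (∏ j ∈ Finset.univ.erase i, (lam - x j) / (x i - x j)) • T (x i))
    (φ : Module.Dual F V) (v : V) (hφ : ∀ i, φ (T (x i) v) = p.eval (x i) * φ v) :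
    φ (T lam v) = p.eval lam * φ v := by
  simp only [hT, LinearMap.add_apply, LinearMap.smul_apply, Module.End.one_apply,
    LinearMap.sum_apply, map_add, map_smul, map_sum, hφ, smul_eq_mul]
  rw [eval_eq_leadingCoeff_mul_prod_add_sum_lagrange hx hp lam, add_mul, Finset.sum_mul]
  simp only [mul_assoc]

theorem Module.Basis.eq_of_dual_apply_eq {ι R V : Type*} [CommSemiring R] [AddCommMonoid V]
    [Module R V] [Module.Projective R V] (b : Module.Basis ι R (Module.Dual R V)) {x y : V}
    (h : ∀ i, b i x = b i y) : x = y :=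
  Module.eval_apply_injective R (b.ext h)

theorem Finset.noncommProd_pow_eq_noncommProd_pow_mul {α M : Type*} [Monoid M] [DecidableEq α]
    {s : Finset α} {a : α} (ha : a ∈ s) (f : α → M) {e e' : α → ℕ}
    (he : ∀ b ≠ a, e' b = e b) (hea : e' a = e a + 1) (comm comm') :
    s.noncommProd (fun b => f b ^ e' b) comm' = s.noncommProd (fun b => f b ^ e b) comm * f a := by
  rw [← noncommProd_erase_mul s ha _ comm', ← noncommProd_erase_mul s ha _ comm, hea, pow_succ,
    ← mul_assoc]
  congr 2
  exact noncommProd_congr rfl (fun b hb => by rw [he b (ne_of_mem_erase hb)]) _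

theorem Finset.prod_pow_update_one_of_eq_zero {ι M : Type*} [Fintype ι] [DecidableEq ι]
    [CommMonoid M] (τ : ι → M) {h : ι → Fin 2} {i : ι} (hi : h i = 0) :
    ∏ n, τ n ^ (update h i 1 n : ℕ) = τ i * ∏ n, τ n ^ (h n : ℕ) := by
  rw [← mul_prod_erase _ _ (mem_univ i),
    ← mul_prod_erase univ (fun n => τ n ^ (h n : ℕ)) (mem_univ i), update_self, hi]
  simp only [Fin.val_one, pow_one, Fin.val_zero, pow_zero, one_mul]
  exact congrArg _ (prod_congr rfl fun n hn => by rw [update_of_ne (ne_of_mem_erase hn)])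

section SeparationOfVariables

variable {ι R H : Type*} [Fintype ι] [DecidableEq ι] [CommSemiring R] [AddCommMonoid H]
  [Module R H] (S : Module.Dual R H) (A : ι → Module.End R H) (hA : ∀ i j, Commute (A i) (A j))

def sovCovector (h : ι → Fin 2) : Module.Dual R H :=
  S ∘ₗ Finset.univ.noncommProd (fun i => A i ^ (h i : ℕ)) fun i _ j _ _ => (hA i j).pow_pow _ _

theorem sovCovector_update_one {h : ι → Fin 2} {i : ι} (hi : h i = 0) :
    sovCovector S A hA (update h i 1) = sovCovector S A hA h ∘ₗ A i := by
  rw [sovCovector, sovCovector, LinearMap.comp_assoc, ← Module.End.mul_eq_comp]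
  congr 1
  refine Finset.noncommProd_pow_eq_noncommProd_pow_mul (Finset.mem_univ i) A
    (fun j hj => by rw [update_of_ne hj]) ?_ _ _
  rw [update_self, hi]
  rfl

variable {S A hA} {τ : ι → R} {v : H}

theorem sovCovector_apply_of_eq_zero
    (hv : ∀ h, sovCovector S A hA h v = ∏ n, τ n ^ (h n : ℕ)) {h : ι → Fin 2} {i : ι}
    (hi : h i = 0) :
    sovCovector S A hA h (A i v) = τ i * sovCovector S A hA h v := by
  rw [← LinearMap.comp_apply, ← sovCovector_update_one S A hA hi, hv, hv,
    Finset.prod_pow_update_one_of_eq_zero τ hi]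

theorem sovCovector_apply_of_eq_one
    (hv : ∀ h, sovCovector S A hA h v = ∏ n, τ n ^ (h n : ℕ)) {h : ι → Fin 2} {i : ι}
    (hi : h i = 1)
    {B : Module.End R H} {μ : R} (hAB : A i * B = (μ * τ i) • 1) :
    sovCovector S A hA h (B v) = μ * sovCovector S A hA h v := by
  have hi0 : update h i 0 i = 0 := update_self i 0 h
  have hh : update (update h i 0) i 1 = h := by rw [update_idem, ← hi, update_eq_self]
  have hsplit := sovCovector_update_one S A hA hi0
  rw [hh] at hsplit
  calc sovCovector S A hA h (B v) = sovCovector S A hA (update h i 0) ((A i * B) v) := by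
        rw [hsplit]; rfl
    _ = μ * (τ i * ∏ n, τ n ^ (update h i 0 n : ℕ)) := by
        rw [hAB, LinearMap.smul_apply, Module.End.one_apply, map_smul, smul_eq_mul, hv, mul_assoc]
    _ = μ * sovCovector S A hA h v := by
        rw [hv, ← Finset.prod_pow_update_one_of_eq_zero τ hi0, hh]

end SeparationOfVariables

section SeparatedPoints

variable {ι R : Type*} {ξ : ι → R} {η : R}

theorem injective_sub_mul_of_separated [CommRing R]
    (hξ : ∀ a b, a ≠ b → ∀ r : ℤ, r ∈ ({-1, 0, 1} : Set ℤ) → ξ a ≠ ξ b + (r : R) * η)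
    (h : ι → Fin 2) : Function.Injective fun i => ξ i - ((h i : ℕ) : R) * η := by
  intro i j hij
  by_contra hne
  refine hξ i j hne ((h i : ℕ) - (h j : ℕ)) ?_ ?_
  · have := (h i).isLt
    have := (h j).isLt
    simp only [Set.mem_insert_iff, Set.mem_singleton_iff]
    omega
  · push_cast
    linear_combination hij

theorem prod_sub_add_ne_zero_of_separated [Fintype ι] [Field R] (hη : η ≠ 0)
    (hξ : ∀ a b, a ≠ b → ∀ r : ℤ, r ∈ ({-1, 0, 1} : Set ℤ) → ξ a ≠ ξ b + (r : R) * η)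
    (a : ι) : ∏ i, (ξ a - ξ i + η) ≠ 0 := by
  refine Finset.prod_ne_zero_iff.mpr fun i _ => ?_
  rcases eq_or_ne a i with rfl | hai
  · simpa using hη
  · intro hz
    exact hξ a i hai (-1) (by simp) (by push_cast; linear_combination hz)

end SeparatedPoints

/-- SoV eigenvector construction for the rational gl(2) chain.
Let `T(λ)` be a commuting family of operators on `H`, `a(λ) = ∏ (λ - ξ_i + η)`,
`d(λ) = ∏ (λ - ξ_i)`, the inhomogeneities satisfying `ξ_a ≠ ξ_b + rη`
(`a ≠ b`, `r ∈ {-1,0,1}`). Assume: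
(1) the covectors `⟨h| = S ∘ ∏_a (T(ξ_a)/a(ξ_a))^(h_a)` (`h_a ∈ {0,1}`) form a
basis of `H*`;
(2) `T(λ)` is given by the degree-`N` interpolation formula with leading operator
coefficient `(tr K)·Id` through the points `ξ_a^{(h_a)} = ξ_a - h_a η`, for every
choice of `h`;
(3) the operator fusion relations
`T(ξ_a)T(ξ_a - η) = a(ξ_a)d(ξ_a - η)(det K)·Id` hold.
If `t(λ)` is a polynomial of degree `N` with leading coefficient `tr K` satisfying
the scalar fusion relations `t(ξ_a)t(ξ_a - η) = a(ξ_a)d(ξ_a - η) det K`, and `v`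
is the vector whose components in the SoV basis are
`⟨h|v⟩ = ∏_n (t(ξ_n)/a(ξ_n))^(h_n)`, then `T(λ)v = t(λ)v` for all `λ`. -/
theorem stmt13 {H : Type*} [AddCommGroup H] [Module ℂ H]
    {N : ℕ} (ξ : Fin N → ℂ) (η : ℂ) (hη : η ≠ 0)
    (hξ : ∀ a b : Fin N, a ≠ b → ∀ r : ℤ, r ∈ ({-1, 0, 1} : Set ℤ) →
      ξ a ≠ ξ b + (r : ℂ) * η)
    (K : Matrix (Fin 2) (Fin 2) ℂ)
    (T : ℂ → Module.End ℂ H)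
    (hcomm : ∀ l m : ℂ, T l * T m = T m * T l)
    (af df : ℂ → ℂ)
    (haf : ∀ lam, af lam = ∏ i, (lam - ξ i + η))
    (S : Module.Dual ℂ H)
    (b : Module.Basis (Fin N → Fin 2) ℂ (Module.Dual ℂ H))
    (hb : ∀ h : Fin N → Fin 2,
      b h = S ∘ₗ (Finset.univ.noncommProd
        (fun i : Fin N => ((af (ξ i))⁻¹ • T (ξ i)) ^ ((h i : ℕ)))
        (by
          intro i _ j _ _
          have : Commute ((af (ξ i))⁻¹ • T (ξ i)) ((af (ξ j))⁻¹ • T (ξ j)) :=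
            ((Commute.smul_left (hcomm (ξ i) (ξ j)) _).smul_right _)
          exact this.pow_pow _ _)))
    (hinterp : ∀ (h : Fin N → Fin 2) (lam : ℂ),
      T lam = (K.trace * ∏ i, (lam - (ξ i - ((h i : ℕ) : ℂ) * η))) • (1 : Module.End ℂ H)
        + ∑ i, (∏ j ∈ Finset.univ.erase i,
            ((lam - (ξ j - ((h j : ℕ) : ℂ) * η)) /
              ((ξ i - ((h i : ℕ) : ℂ) * η) - (ξ j - ((h j : ℕ) : ℂ) * η))))
          • T (ξ i - ((h i : ℕ) : ℂ) * η))
    (hfusion : ∀ a : Fin N, T (ξ a) * T (ξ a - η)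
        = (af (ξ a) * df (ξ a - η) * K.det) • (1 : Module.End ℂ H))
    (t : Polynomial ℂ) (ht : t.natDegree = N) (htl : t.leadingCoeff = K.trace)
    (hfus : ∀ a : Fin N,
      t.eval (ξ a) * t.eval (ξ a - η) = af (ξ a) * df (ξ a - η) * K.det)
    (v : H)
    (hv : ∀ h : Fin N → Fin 2,
      (b h) v = ∏ n, (t.eval (ξ n) / af (ξ n)) ^ ((h n : ℕ))) :
    ∀ lam : ℂ, (T lam) v = t.eval lam • v := by
  have haf_ne : ∀ i, af (ξ i) ≠ 0 := fun i =>
    haf (ξ i) ▸ prod_sub_add_ne_zero_of_separated hη hξ i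
  set A : Fin N → Module.End ℂ H := fun i => (af (ξ i))⁻¹ • T (ξ i)
  have hA : ∀ i j, Commute (A i) (A j) := fun i j =>
    (Commute.smul_left (hcomm (ξ i) (ξ j)) _).smul_right _
  have hbA : ∀ h, b h = sovCovector S A hA h := hb
  have hvA : ∀ h, sovCovector S A hA h v = ∏ n, (t.eval (ξ n) / af (ξ n)) ^ (h n : ℕ) :=
    fun h => hbA h ▸ hv h
  have hnodes : ∀ h i, b h (T (ξ i - ((h i : ℕ) : ℂ) * η) v)
      = t.eval (ξ i - ((h i : ℕ) : ℂ) * η) * b h v := by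
    intro h i
    rw [hbA]
    obtain hi | hi : h i = 0 ∨ h i = 1 := by omega
    · have hT : T (ξ i) = af (ξ i) • A i := by
        simp only [A, smul_smul, mul_inv_cancel₀ (haf_ne i), one_smul]
      rw [hi, Fin.val_zero, Nat.cast_zero, zero_mul, sub_zero, hT, LinearMap.smul_apply,
        map_smul, sovCovector_apply_of_eq_zero hvA hi, smul_eq_mul, ← mul_assoc,
        mul_div_cancel₀ _ (haf_ne i)]
    · rw [hi, Fin.val_one, Nat.cast_one, one_mul]
      refine sovCovector_apply_of_eq_one hvA hi ?_
      rw [smul_mul_assoc, hfusion, smul_smul, ← hfus]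
      congr 1
      field_simp
  intro lam
  refine Module.Basis.eq_of_dual_apply_eq b fun h => ?_
  rw [map_smul, smul_eq_mul]
  refine Module.Dual.apply_eq_eval_mul_of_lagrange (injective_sub_mul_of_separated hξ h)
    (by rw [ht, Fintype.card_fin]) ?_ (b h) v (hnodes h)
  rw [htl]
  exact hinterp h lam
end

section
/- Suppose t₁(λ) and t₂(λ) are polynomials (degrees N and 2N respectively) satisfying the gl(3) fusion relations t₂(ξ_a - η) = t₁(ξ_a - η)t₁(ξ_a) and t₁(ξ_a)t₂(ξ_a - 2η) = q-det(ξ_a - 2η) for all a = 1,...,N, where q-det(λ) = det K · ∏_{b=1}^N (λ - ξ_b)(λ + η - ξ_b)(λ + 3η - ξ_b). Suppose further there exists a polynomial φ(λ) = ∏_{a=1}^M (λ - λ_a) with λ_a ≠ ξ_n satisfying γ(ξ_a)φ(ξ_a - η)/φ(ξ_a) = t₁(ξ_a) for all a, where γ(λ) = γ_0 ∏(λ + η - ξ_a) and γ_0 is a nonzero eigenvalue of K. Then the quantum spectral curve α(λ)φ(λ-3η) - β(λ)t₁(λ-2η)φ(λ-2η) + γ(λ)t₂(λ-2η)φ(λ-η)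 - q-det(λ-2η)φ(λ) = 0 holds at each of the 4N points ξ_a + kη, k ∈ {-1, 0, 1, 2}, where β(λ) = γ(λ)γ(λ-η) and α(λ) = γ(λ)γ(λ-η)γ(λ-2η). -/
/-- gl(3) quantum spectral curve at the inhomogeneity points.
Suppose the polynomials `t₁` (degree `N`) and `t₂` (degree `2N`) satisfy the gl(3)
fusion relations `t₂(ξ_a - η) = t₁(ξ_a - η)t₁(ξ_a)` and
`t₁(ξ_a)t₂(ξ_a - 2η) = qdet(ξ_a - 2η)`, where
`qdet(λ) = det K ∏_b (λ - ξ_b)(λ + η - ξ_b)(λ + 3η - ξ_b)`, and `t₂` has the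
trivial zeros `t₂(ξ_a) = 0`. Suppose there is a polynomial
`φ(λ) = ∏ (λ - μ_a)` with `μ_a ≠ ξ_n` satisfying
`γ(ξ_a)φ(ξ_a - η)/φ(ξ_a) = t₁(ξ_a)`, where `γ(λ) = γ₀ ∏ (λ + η - ξ_a)` and `γ₀`
is a nonzero eigenvalue of the `3×3` matrix `K`. Then, with `β(λ) = γ(λ)γ(λ-η)`
and `α(λ) = γ(λ)γ(λ-η)γ(λ-2η)`, the quantum spectral curve
`α(λ)φ(λ-3η) - β(λ)t₁(λ-2η)φ(λ-2η) + γ(λ)t₂(λ-2η)φ(λ-η) - qdet(λ-2η)φ(λ) = 0`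
holds at each of the `4N` points `ξ_a + kη`, `k ∈ {-1, 0, 1, 2}`. -/
theorem stmt15 {N M : ℕ} (hMN : M ≤ N)
    (ξ : Fin N → ℂ) (μ : Fin M → ℂ) (η : ℂ) (hη : η ≠ 0)
    (hξ : ∀ a b : Fin N, a ≠ b → ∀ r : ℤ, r ∈ ({-2, -1, 0, 1, 2} : Set ℤ) →
      ξ a ≠ ξ b + (r : ℂ) * η)
    (K : Matrix (Fin 3) (Fin 3) ℂ) (γ₀ : ℂ) (hγ₀ : γ₀ ≠ 0)
    (hγ₀eq : γ₀ ^ 3 - γ₀ ^ 2 * K.trace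
        + γ₀ * ((K.trace ^ 2 - (K * K).trace) / 2) = K.det)
    (hμξ : ∀ a b, μ a ≠ ξ b)
    (t₁ t₂ : Polynomial ℂ) (ht₁ : t₁.natDegree = N) (ht₂ : t₂.natDegree = 2 * N)
    (qdet γf βf αf φf : ℂ → ℂ)
    (hqdet : ∀ lam, qdet lam
      = K.det * ∏ b, ((lam - ξ b) * (lam + η - ξ b) * (lam + 3 * η - ξ b)))
    (hγf : ∀ lam, γf lam = γ₀ * ∏ a, (lam + η - ξ a))
    (hβf : ∀ lam, βf lam = γf lam * γf (lam - η))
    (hαf : ∀ lam, αf lam = γf lam * γf (lam - η) * γf (lam - 2 * η))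
    (hφf : ∀ lam, φf lam = ∏ a, (lam - μ a))
    (hfus1 : ∀ a : Fin N, t₂.eval (ξ a - η) = t₁.eval (ξ a - η) * t₁.eval (ξ a))
    (hfus2 : ∀ a : Fin N, t₁.eval (ξ a) * t₂.eval (ξ a - 2 * η) = qdet (ξ a - 2 * η))
    (ht₂zero : ∀ a : Fin N, t₂.eval (ξ a) = 0)
    (hTQ : ∀ a : Fin N, γf (ξ a) * φf (ξ a - η) / φf (ξ a) = t₁.eval (ξ a)) :
    ∀ (a : Fin N) (r : ℤ), r ∈ ({-1, 0, 1, 2} : Set ℤ) →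
      αf (ξ a + (r : ℂ) * η) * φf (ξ a + (r : ℂ) * η - 3 * η)
        - βf (ξ a + (r : ℂ) * η) * t₁.eval (ξ a + (r : ℂ) * η - 2 * η)
            * φf (ξ a + (r : ℂ) * η - 2 * η)
        + γf (ξ a + (r : ℂ) * η) * t₂.eval (ξ a + (r : ℂ) * η - 2 * η)
            * φf (ξ a + (r : ℂ) * η - η)
        - qdet (ξ a + (r : ℂ) * η - 2 * η) * φf (ξ a + (r : ℂ) * η) = 0 := by
  -- γ vanishes at ξ_a - η
  have hγzero : ∀ a : Fin N, γf (ξ a - η) = 0 := by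
    intro a
    rw [hγf]
    refine mul_eq_zero_of_right _ (Finset.prod_eq_zero (Finset.mem_univ a) ?_)
    ring
  -- φ does not vanish at ξ_a
  have hφne : ∀ a : Fin N, φf (ξ a) ≠ 0 := by
    intro a
    rw [hφf]
    exact Finset.prod_ne_zero_iff.2 fun b _ => sub_ne_zero_of_ne (Ne.symm (hμξ b a))
  -- TQ relation in product form
  have hTQ' : ∀ a : Fin N, γf (ξ a) * φf (ξ a - η) = t₁.eval (ξ a) * φf (ξ a) := by
    intro a
    have h := hTQ a
    rw [div_eq_iff (hφne a)] at h
    exact h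
  -- zeros of qdet
  have hq1 : ∀ a : Fin N, qdet (ξ a) = 0 := by
    intro a
    rw [hqdet]
    refine mul_eq_zero_of_right _ (Finset.prod_eq_zero (Finset.mem_univ a) ?_)
    ring
  have hq2 : ∀ a : Fin N, qdet (ξ a - η) = 0 := by
    intro a
    rw [hqdet]
    refine mul_eq_zero_of_right _ (Finset.prod_eq_zero (Finset.mem_univ a) ?_)
    ring
  have hq3 : ∀ a : Fin N, qdet (ξ a - 3 * η) = 0 := by
    intro a
    rw [hqdet]
    refine mul_eq_zero_of_right _ (Finset.prod_eq_zero (Finset.mem_univ a) ?_)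
    ring
  intro a r hr
  simp only [Set.mem_insert_iff, Set.mem_singleton_iff] at hr
  rcases hr with rfl | rfl | rfl | rfl
  · -- r = -1
    have hl : ξ a + ((-1 : ℤ) : ℂ) * η = ξ a - η := by push_cast; ring
    rw [hl, hαf, hβf]
    have e3 : ξ a - η - 2 * η = ξ a - 3 * η := by ring
    rw [e3, hγzero a, hq3 a]
    ring
  · -- r = 0
    have hl : ξ a + ((0 : ℤ) : ℂ) * η = ξ a := by push_cast; ring
    rw [hl, hαf, hβf, hγzero a]
    linear_combination t₂.eval (ξ a - 2 * η) * hTQ' a + φf (ξ a) * hfus2 a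
  · -- r = 1
    have hl : ξ a + ((1 : ℤ) : ℂ) * η = ξ a + η := by push_cast; ring
    rw [hl, hαf, hβf]
    have e1 : ξ a + η - η = ξ a := by ring
    have e2 : ξ a + η - 2 * η = ξ a - η := by ring
    have e3 : ξ a + η - 3 * η = ξ a - 2 * η := by ring
    rw [e1, e2, e3, hγzero a, hq2 a, hfus1 a]
    linear_combination (-(γf (ξ a + η) * t₁.eval (ξ a - η))) * hTQ' a
  · -- r = 2
    have hl : ξ a + ((2 : ℤ) : ℂ) * η = ξ a + 2 * η := by push_cast; ring
    rw [hl, hαf, hβf]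
    have e1 : ξ a + 2 * η - η = ξ a + η := by ring
    have e2 : ξ a + 2 * η - 2 * η = ξ a := by ring
    have e3 : ξ a + 2 * η - 3 * η = ξ a - η := by ring
    rw [e1, e2, e3, ht₂zero a, hq1 a]
    linear_combination (γf (ξ a + 2 * η) * γf (ξ a + η)) * hTQ' a
end
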